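/- Conservativity of procedure summaries: if a procedure f contains no assertions and none of its transitive callees contain assertions, then every terminating execution of f's body is non-failing; hence the summary 'true' is a sound safety condition for f. Dually, the summary 'false' is trivially a sound safety condition for any procedure (it vacuously implies wp of the body with respect to true). -/

import Mathlib

abbrev Var := String
abbrev State := Var → ℤ

inductive Outcome | fail | assumeViolation | ok
deriving DecidableEq

inductive Stmt
  | skip
  | assign (v : Var) (e : State → ℤ)
  | assertS (p : State → Prop)
  | assumeS (p : State → Prop)
  | seq (s₁ s₂ : Stmt)
  | ite (s₁ s₂ : Stmt)

inductive Exec : Stmt → State → Outcome → State → Prop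
  | skip {σ} : Exec .skip σ .ok σ
  | assign {σ v e} : Exec (.assign v e) σ .ok (Function.update σ v (e σ))
  | assertOk {σ p} : p σ → Exec (.assertS p) σ .ok σ
  | assertFail {σ p} : ¬ p σ → Exec (.assertS p) σ .fail σ
  | assumeOk {σ p} : p σ → Exec (.assumeS p) σ .ok σ
  | assumeViol {σ p} : ¬ p σ → Exec (.assumeS p) σ .assumeViolation σ
  | seqOk {s₁ s₂ σ σ₁ φ σ₂} : Exec s₁ σ .ok σ₁ → Exec s₂ σ₁ φ σ₂ → Exec (.seq s₁ s₂) σ φ σ₂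
  | seqAbort {s₁ s₂ σ φ σ₁} : Exec s₁ σ φ σ₁ → φ ≠ .ok → Exec (.seq s₁ s₂) σ φ σ₁
  | iteL {s₁ s₂ σ φ σ'} : Exec s₁ σ φ σ' → Exec (.ite s₁ s₂) σ φ σ'
  | iteR {s₁ s₂ σ φ σ'} : Exec s₂ σ φ σ' → Exec (.ite s₁ s₂) σ φ σ'

def EquiSafe (s s' : Stmt) : Prop :=
  ∀ σ σ', Exec s σ .fail σ' ↔ Exec s' σ .fail σ'

def Trimmed (s s' : Stmt) : Prop :=
  EquiSafe s s' ∧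
  (∀ σ σ', Exec s σ .ok σ' →
     Exec s' σ .ok σ' ∨ ∃ σ'', Exec s' σ .assumeViolation σ'') ∧
  (∀ σ σ', Exec s σ .assumeViolation σ' → ∃ σ'', Exec s' σ .assumeViolation σ'')

def NoAssert : Stmt → Prop
  | .skip => True
  | .assign _ _ => True
  | .assertS _ => False
  | .assumeS _ => True
  | .seq s₁ s₂ => NoAssert s₁ ∧ NoAssert s₂
  | .ite s₁ s₂ => NoAssert s₁ ∧ NoAssert s₂

theorem Exec.ne_fail_of_noAssert {s : Stmt} {σ σ' : State} {φ : Outcome}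
    (hx : Exec s σ φ σ') (hs : NoAssert s) : φ ≠ .fail := by
  induction hx with
  | assertFail => exact hs.elim
  | seqOk _ _ _ ih₂ => exact ih₂ hs.2
  | seqAbort _ _ ih₁ => exact ih₁ hs.1
  | iteL _ ih => exact ih hs.1
  | iteR _ ih => exact ih hs.2
  | _ => decide

/-- Conservativity of procedure summaries: (1) if a body contains no assert
nodes, then the summary `true` is a sound safety condition (no terminating
execution fails); (2) the summary `false` is trivially sound for any body. -/
theorem summary_conservative :
    (∀ s : Stmt, NoAssert s → ∀ (σ σ' : State), ¬ Exec s σ .fail σ') ∧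
    (∀ (s : Stmt) (σ : State), False → ∀ σ' : State, ¬ Exec s σ .fail σ') := by
  exact ⟨fun _ hs _ _ hx => hx.ne_fail_of_noAssert hs rfl, fun _ _ h => h.elim⟩
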